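/- arXiv:1011.1669 — 2 statements merged into one kernel-verified Lean document; each statement's English description precedes it below -/
import Mathlib

section
/- Let X = L₀/2 − (1+α+β)/2 with L₀ = 2(1−x)∂_x R + (α+β+1 − α x^{−1})(1 − R), and (Z f)(x) = (x−1)f(−x). Then ZX + XZ = Y + β·Id, where Y is multiplication by x. -/
open Polynomial

/-- The operator `L₀ = 2(1-x) ∂ₓ R + (α+β+1 - α x⁻¹)(1-R)` on polynomials. -/
noncomputable def L0 (α β : ℝ) (p : Polynomial ℝ) : Polynomial ℝ :=
  (2 : ℝ) • ((1 - X) * derivative (p.comp (-X)))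
    + (α + β + 1) • (p - p.comp (-X))
    - α • ((p - p.comp (-X)) /ₘ X)

/-- `X = L₀/2 - (1+α+β)/2`. -/
noncomputable def Xop (α β : ℝ) (p : Polynomial ℝ) : Polynomial ℝ :=
  (1 / 2 : ℝ) • L0 α β p - ((1 + α + β) / 2) • p

/-- `Y` is multiplication by `x`. -/
noncomputable def Yop (p : Polynomial ℝ) : Polynomial ℝ := X * p

/-- `(Zf)(x) = (x-1) f(-x)`. -/
noncomputable def Zop (p : Polynomial ℝ) : Polynomial ℝ := (X - 1) * p.comp (-X)

/-! Write `q = (p(x) - p(-x)) / x`, an even polynomial. Then `x⁻¹(1 - R)` acts on `p` and on `Z p`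
through `q` alone: `(Z p - R Z p) / x = p + R p + q`. Evaluating both sides of the identity at a
point, the derivative terms cancel because `(x - 1)(1 + x) = -(1 - x)(x + 1)`, and the remaining
`α`-terms collapse via `x q(x) = p(x) - p(-x)`. -/

namespace Polynomial

variable {R : Type*} [CommRing R]

theorem X_mul_sub_comp_neg_X_divByMonic_X (p : R[X]) :
    X * ((p - p.comp (-X)) /ₘ X) = p - p.comp (-X) := by
  have h := modByMonic_add_div (p - p.comp (-X)) (X : R[X])
  rwa [modByMonic_X, eval_sub, eval_comp, eval_neg, eval_X, neg_zero, sub_self, C_0,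
    zero_add] at h

theorem sub_comp_neg_X_divByMonic_X_comp_neg_X [IsDomain R] (p : R[X]) :
    ((p - p.comp (-X)) /ₘ X).comp (-X) = (p - p.comp (-X)) /ₘ X := by
  have h := congrArg (·.comp (-X)) (X_mul_sub_comp_neg_X_divByMonic_X p)
  simp only [mul_comp, X_comp, sub_comp, comp_neg_X_comp_neg_X] at h
  refine mul_left_cancel₀ (neg_ne_zero.mpr (X_ne_zero (R := R))) ?_
  rw [h, neg_mul, X_mul_sub_comp_neg_X_divByMonic_X, neg_sub]

end Polynomial

theorem Zop_comp_neg_X (p : Polynomial ℝ) : (Zop p).comp (-X) = -(X + 1) * p := by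
  rw [Zop, mul_comp, comp_neg_X_comp_neg_X]
  simp only [sub_comp, X_comp, one_comp]
  ring

theorem Zop_sub_comp_neg_X_divByMonic_X (p : Polynomial ℝ) :
    (Zop p - (Zop p).comp (-X)) /ₘ X = p + p.comp (-X) + (p - p.comp (-X)) /ₘ X := by
  refine (div_modByMonic_unique _ 0 monic_X ⟨?_, by simp⟩).1
  rw [Zop_comp_neg_X, zero_add, Zop]
  linear_combination X_mul_sub_comp_neg_X_divByMonic_X p

/-- The anticommutation relation `ZX + XZ = Y + β·Id`. -/
theorem ZX_plus_XZ (α β : ℝ) (p : Polynomial ℝ) :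
    Zop (Xop α β p) + Xop α β (Zop p) = Yop p + β • p := by
  have hXq := X_mul_sub_comp_neg_X_divByMonic_X p
  have hq_even := sub_comp_neg_X_divByMonic_X_comp_neg_X p
  simp only [Xop, L0, Zop_sub_comp_neg_X_divByMonic_X]
  generalize (p - p.comp (-X)) /ₘ X = q at hXq hq_even ⊢
  refine Polynomial.funext fun x => ?_
  have hx := congrArg (eval x) hXq
  have hqx : q.eval (-x) = q.eval x := by simpa [eval_comp] using congrArg (eval x) hq_even
  simp only [eval_mul, eval_X, eval_sub, eval_comp, eval_neg, Zop, one_div, derivative_comp,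
    derivative_neg, derivative_X, neg_mul, one_mul, mul_neg, smul_neg, sub_comp, smul_comp,
    add_comp, neg_comp, mul_comp, one_comp, X_comp, sub_neg_eq_add, derivative_mul,
    derivative_sub, derivative_one, sub_zero, neg_neg, smul_add, eval_add, eval_one, eval_smul,
    smul_eq_mul, hqx, Yop] at hx ⊢
  linear_combination (-α / 2) * hx
end

section
/- For α > −1 and β > −1, the moments of the weight w(x) = κ|x|^α (1−x²)^{(β−1)/2}(1+x) on [−1,1], with κ = Γ(α/2+β/2+1)/(Γ(β/2+1/2)Γ(α/2+1/2)), satisfy c₀ = 1 and c_{2n} = c_{2n−1} = (α/2+1/2)_n / (α/2+β/2+1)_n for n ≥ 1, where c_n = ∫_{−1}^1 w(x) x^n dx and (a)_n denotes the Pochhammer symbol. -/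
open Real Polynomial

/-!
On `[0, 1]` the even part of `(1 + x) x^m` is `2 x^(2n)` both for `m = 2n` and for `m = 2n - 1`,
so folding `∫_{-1}^1` onto `∫_0^1` reduces every moment to
`2 ∫_0^1 x^(α + 2n) (1 - x²)^((β-1)/2)`.
The substitution `t = x²` turns this into the Euler Beta integral
`B((α + 1)/2 + n, (β + 1)/2)`, and `Γ(s + n) = Γ(s) (s)_n` collapses the Gamma quotients
to Pochhammer symbols.
-/

open MeasureTheory Set intervalIntegral

theorem Real.Gamma_add_nat_eq_mul_ascPochhammer {s : ℝ} (hs : 0 < s) (n : ℕ) :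
    Gamma (s + n) = Gamma s * (ascPochhammer ℝ n).eval s := by
  induction n with
  | zero => simp
  | succ n ih =>
    have hsn : s + n ≠ 0 := by positivity
    rw [ascPochhammer_succ_eval, Nat.cast_succ, ← add_assoc, Gamma_add_one hsn, ih]
    ring

theorem integral_rpow_mul_one_sub_rpow {u v : ℝ} (hu : 0 < u) (hv : 0 < v) :
    ∫ x in (0 : ℝ)..1, x ^ (u - 1) * (1 - x) ^ (v - 1) = Gamma u * Gamma v / Gamma (u + v) := by
  have hbeta :
      Complex.betaIntegral u v = ↑(∫ x in (0 : ℝ)..1, x ^ (u - 1) * (1 - x) ^ (v - 1)) := by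
    rw [Complex.betaIntegral, ← intervalIntegral.integral_ofReal]
    refine integral_congr fun x hx => ?_
    rw [uIcc_of_le zero_le_one] at hx
    rw [Complex.ofReal_mul, Complex.ofReal_cpow hx.1, Complex.ofReal_cpow (sub_nonneg.2 hx.2)]
    push_cast
    rfl
  have h := Complex.Gamma_mul_Gamma_eq_betaIntegral (s := u) (t := v) (by simpa) (by simpa)
  rw [hbeta, ← Complex.ofReal_add, Complex.Gamma_ofReal, Complex.Gamma_ofReal,
    Complex.Gamma_ofReal] at h
  rw [eq_div_iff (Gamma_pos_of_pos (add_pos hu hv)).ne', mul_comm]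
  exact_mod_cast h.symm

theorem image_sq_Ioc_zero_one : (fun x : ℝ => x ^ 2) '' Ioc 0 1 = Ioc 0 1 := by
  simpa using (continuousOn_pow 2).image_Ioc_of_strictMonoOn zero_le_one
    ((pow_left_strictMonoOn₀ two_ne_zero).mono fun x (hx : x ∈ Icc (0 : ℝ) 1) => hx.1)

theorem integral_rpow_mul_one_sub_sq_rpow {a b : ℝ} (ha : -1 < a) (hb : -1 < b) :
    ∫ x in (0 : ℝ)..1, x ^ a * (1 - x ^ 2) ^ b
      = Gamma ((a + 1) / 2) * Gamma (b + 1) / (2 * Gamma ((a + 1) / 2 + (b + 1))) := by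
  set g : ℝ → ℝ := fun t => t ^ ((a + 1) / 2 - 1) * (1 - t) ^ (b + 1 - 1)
  have hsubst : ∫ x in Ioc (0 : ℝ) 1, |2 * x| • g (x ^ 2) = ∫ t in Ioc (0 : ℝ) 1, g t := by
    rw [← integral_image_eq_integral_abs_deriv_smul measurableSet_Ioc
      (fun x _ => (hasDerivAt_pow 2 x).hasDerivWithinAt.congr_deriv (by ring))
      ((pow_left_strictMonoOn₀ two_ne_zero).injOn.mono fun x hx => le_of_lt hx.1),
      image_sq_Ioc_zero_one]
  have hpt :
      ∀ x ∈ Ioc (0 : ℝ) 1, x ^ a * (1 - x ^ 2) ^ b = 2⁻¹ * (|2 * x| • g (x ^ 2)) := by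
    intro x hx
    have hx0 : 0 < x := hx.1
    have hpow : (x ^ 2) ^ ((a + 1) / 2 - 1) = x ^ (a - 1) := by
      rw [← rpow_natCast_mul hx0.le]; ring_nf
    simp only [g, smul_eq_mul, abs_of_pos (by positivity : 0 < 2 * x), hpow, add_sub_cancel_right,
      rpow_sub_one hx0.ne']
    field_simp
  rw [integral_of_le zero_le_one, setIntegral_congr_fun measurableSet_Ioc hpt,
    MeasureTheory.integral_const_mul, hsubst, ← integral_of_le zero_le_one,
    integral_rpow_mul_one_sub_rpow (by linarith) (by linarith)]
  ring

theorem intervalIntegrable_rpow_mul_one_sub_sq_rpow {a b : ℝ} (ha : -1 < a) (hb : -1 < b) :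
    IntervalIntegrable (fun x : ℝ => x ^ a * (1 - x ^ 2) ^ b) volume 0 1 := by
  -- a non-integrable function would have integral `0`
  refine intervalIntegrable_of_integral_ne_zero ?_
  rw [integral_rpow_mul_one_sub_sq_rpow ha hb]
  have := Gamma_pos_of_pos (by linarith : 0 < (a + 1) / 2)
  have := Gamma_pos_of_pos (by linarith : 0 < b + 1)
  have := Gamma_pos_of_pos (by linarith : 0 < (a + 1) / 2 + (b + 1))
  positivity

theorem intervalIntegrable_abs_rpow_mul_one_sub_sq_rpow {a b : ℝ} (ha : -1 < a) (hb : -1 < b) :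
    IntervalIntegrable (fun x : ℝ => |x| ^ a * (1 - x ^ 2) ^ b) volume (-1) 1 := by
  have hpos : IntervalIntegrable (fun x : ℝ => |x| ^ a * (1 - x ^ 2) ^ b) volume 0 1 :=
    (intervalIntegrable_rpow_mul_one_sub_sq_rpow ha hb).congr fun x hx => by
      rw [abs_of_nonneg (by simpa using hx.1.le)]
  have hneg := ((IntervalIntegrable.iff_comp_neg).mp hpos).symm
  simp only [abs_neg, neg_sq, neg_zero] at hneg
  exact hneg.trans hpos

theorem intervalIntegral.integral_neg_self_eq_integral_add_comp_neg {E : Type*}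
    [NormedAddCommGroup E] [NormedSpace ℝ E] {f : ℝ → E} {a : ℝ}
    (hf : IntervalIntegrable f volume (-a) a) :
    ∫ x in -a..a, f x = ∫ x in 0..a, (f x + f (-x)) := by
  have h0 : (0 : ℝ) ∈ uIcc (-a) a := by
    rcases le_total 0 a with h | h <;> simp [h]
  have hleft := hf.mono_set (uIcc_subset_uIcc left_mem_uIcc h0)
  have hright := hf.mono_set (uIcc_subset_uIcc h0 right_mem_uIcc)
  rw [← integral_add_adjacent_intervals hleft hright, integral_add hright, add_comm,
    integral_comp_neg, neg_zero]
  simpa using ((IntervalIntegrable.iff_comp_neg).mp hleft).symm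

theorem one_add_mul_pow_add_one_sub_mul_neg_pow {R : Type*} [CommRing R] (x : R) {m n : ℕ}
    (h : m = 2 * n ∨ m + 1 = 2 * n) :
    (1 + x) * x ^ m + (1 - x) * (-x) ^ m = 2 * x ^ (2 * n) := by
  rcases h with rfl | h
  · rw [(even_two_mul n).neg_pow]; ring
  · obtain ⟨k, rfl⟩ : ∃ k, m = 2 * k + 1 := ⟨n - 1, by omega⟩
    rw [← h, (odd_two_mul_add_one k).neg_pow]; ring

theorem integral_abs_rpow_mul_one_sub_sq_rpow_mul_one_add_mul_pow {a b : ℝ} (ha : -1 < a)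
    (hb : -1 < b) {m n : ℕ} (hmn : m = 2 * n ∨ m + 1 = 2 * n) :
    ∫ x in (-1 : ℝ)..1, |x| ^ a * (1 - x ^ 2) ^ b * (1 + x) * x ^ m
      = Gamma ((a + 1) / 2 + n) * Gamma (b + 1) / Gamma ((a + 1) / 2 + n + (b + 1)) := by
  have hint : IntervalIntegrable (fun x : ℝ => |x| ^ a * (1 - x ^ 2) ^ b * (1 + x) * x ^ m)
      volume (-1) 1 := by
    simpa only [mul_assoc] using
      (intervalIntegrable_abs_rpow_mul_one_sub_sq_rpow ha hb).mul_continuousOn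
        (f := fun x => |x| ^ a * (1 - x ^ 2) ^ b) (g := fun x : ℝ => (1 + x) * x ^ m)
        (by fun_prop)
  have hsymm : ∀ᵐ x : ℝ, x ∈ uIoc 0 1 →
      |x| ^ a * (1 - x ^ 2) ^ b * (1 + x) * x ^ m
        + |-x| ^ a * (1 - (-x) ^ 2) ^ b * (1 + -x) * (-x) ^ m
        = 2 * (x ^ (a + (2 * n : ℕ)) * (1 - x ^ 2) ^ b) := by
    refine Filter.Eventually.of_forall fun x hx => ?_
    have hx0 : 0 < x := by simpa using hx.1
    rw [abs_neg, neg_sq, abs_of_pos hx0, rpow_add_natCast hx0.ne']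
    linear_combination x ^ a * (1 - x ^ 2) ^ b * one_add_mul_pow_add_one_sub_mul_neg_pow x hmn
  have ha' : -1 < a + (2 * n : ℕ) := by push_cast; linarith [(n.cast_nonneg : (0 : ℝ) ≤ n)]
  rw [integral_neg_self_eq_integral_add_comp_neg hint, integral_congr_ae hsymm,
    intervalIntegral.integral_const_mul, integral_rpow_mul_one_sub_sq_rpow ha' hb, Nat.cast_mul,
    Nat.cast_two, show (a + 2 * n + 1) / 2 = (a + 1) / 2 + n by ring]
  field_simp

/-- For `α > -1`, `β > -1`, the moments of the weight
`w(x) = κ |x|^α (1-x²)^{(β-1)/2} (1+x)` on `[-1,1]`, with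
`κ = Γ(α/2+β/2+1)/(Γ(β/2+1/2) Γ(α/2+1/2))`, satisfy `c₀ = 1` and
`c_{2n} = c_{2n-1} = (α/2+1/2)_n / (α/2+β/2+1)_n` for `n ≥ 1`. -/
theorem moments_of_little_m1_jacobi_weight (α β : ℝ) (hα : -1 < α) (hβ : -1 < β)
    (κ : ℝ) (hκ : κ = Real.Gamma (α/2 + β/2 + 1) / (Real.Gamma (β/2 + 1/2) * Real.Gamma (α/2 + 1/2)))
    (w : ℝ → ℝ) (hw : ∀ x, w x = κ * |x| ^ α * (1 - x^2) ^ ((β - 1)/2) * (1 + x))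
    (c : ℕ → ℝ) (hc : ∀ n, c n = ∫ x in (-1:ℝ)..1, w x * x ^ n) :
    c 0 = 1 ∧ ∀ n : ℕ, 1 ≤ n →
      c (2 * n) = (ascPochhammer ℝ n).eval (α/2 + 1/2) / (ascPochhammer ℝ n).eval (α/2 + β/2 + 1) ∧
      c (2 * n - 1) = (ascPochhammer ℝ n).eval (α/2 + 1/2) / (ascPochhammer ℝ n).eval (α/2 + β/2 + 1) := by
  have hA : 0 < α / 2 + 1 / 2 := by linarith
  have hB : 0 < β / 2 + 1 / 2 := by linarith
  have hS : 0 < α / 2 + β / 2 + 1 := by linarith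
  have moment (m n : ℕ) (hmn : m = 2 * n ∨ m + 1 = 2 * n) :
      c m = (ascPochhammer ℝ n).eval (α/2 + 1/2) /
        (ascPochhammer ℝ n).eval (α/2 + β/2 + 1) := by
    have hwm (x : ℝ) :
        w x * x ^ m = κ * (|x| ^ α * (1 - x ^ 2) ^ ((β - 1) / 2) * (1 + x) * x ^ m) := by
      rw [hw]; ring
    simp_rw [hc, hwm]
    rw [intervalIntegral.integral_const_mul,
      integral_abs_rpow_mul_one_sub_sq_rpow_mul_one_add_mul_pow hα (by linarith) hmn, hκ,
      show (α + 1) / 2 = α / 2 + 1 / 2 by ring, show (β - 1) / 2 + 1 = β / 2 + 1 / 2 by ring,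
      show α / 2 + 1 / 2 + n + (β / 2 + 1 / 2) = α / 2 + β / 2 + 1 + n by ring,
      Gamma_add_nat_eq_mul_ascPochhammer hA, Gamma_add_nat_eq_mul_ascPochhammer hS]
    generalize α / 2 + 1 / 2 = A, β / 2 + 1 / 2 = B, α / 2 + β / 2 + 1 = S at *
    have := (Gamma_pos_of_pos hA).ne'
    have := (Gamma_pos_of_pos hB).ne'
    have := (Gamma_pos_of_pos hS).ne'
    have := (ascPochhammer_pos n S hS).ne'
    field_simp
  exact ⟨by simpa using moment 0 0 (Or.inl rfl),
    fun n hn => ⟨moment _ n (Or.inl rfl), moment _ n (Or.inr (by omega))⟩⟩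
end
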